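/- For A = a₁X + b₁H + c₁Y ∈ sl(2,ℝ), define the function Ã(p,q) = 2a₁(p·cos q - λ·sin q) + 2b₁(p·sin q + λ·cos q) - 2c₁p on ℝ². Then for A, B ∈ sl(2,ℝ), the canonical Poisson bracket {Ã, B̃} = ∂ₚÃ·∂_qB̃ - ∂_qÃ·∂ₚB̃ equals the function associated to [A,B]: {Ã, B̃} = \widetilde{[A,B]}. -/

import Mathlib

open Real

/-- The Hamiltonian function on the orbit associated to `A = a₁X + b₁H + c₁Y`. -/
noncomputable def tildeFun (lam a₁ b₁ c₁ : ℝ) (p q : ℝ) : ℝ :=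
  2 * a₁ * (p * Real.cos q - lam * Real.sin q) +
    2 * b₁ * (p * Real.sin q + lam * Real.cos q) - 2 * c₁ * p

theorem hasDerivAt_tildeFun_fst (lam a b c p q : ℝ) :
    HasDerivAt (fun p' => tildeFun lam a b c p' q)
      (2 * a * cos q + 2 * b * sin q - 2 * c) p := by
  have hX := (((hasDerivAt_id p).mul_const (cos q)).sub_const (lam * sin q)).const_mul (2 * a)
  have hH := (((hasDerivAt_id p).mul_const (sin q)).add_const (lam * cos q)).const_mul (2 * b)
  have hY := (hasDerivAt_id p).const_mul (2 * c)
  exact ((hX.add hH).sub hY).congr_deriv (by ring)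

theorem hasDerivAt_tildeFun_snd (lam a b c p q : ℝ) :
    HasDerivAt (fun q' => tildeFun lam a b c p q')
      (2 * a * (-(p * sin q) - lam * cos q) + 2 * b * (p * cos q - lam * sin q)) q := by
  have hX := (((hasDerivAt_cos q).const_mul p).sub
    ((hasDerivAt_sin q).const_mul lam)).const_mul (2 * a)
  have hH := (((hasDerivAt_sin q).const_mul p).add
    ((hasDerivAt_cos q).const_mul lam)).const_mul (2 * b)
  exact ((hX.add hH).sub_const (2 * c * p)).congr_deriv (by ring)

theorem poisson_bracket_is_lie_bracket (lam a₁ b₁ c₁ a₂ b₂ c₂ : ℝ) (p q : ℝ) :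
    deriv (fun p' => tildeFun lam a₁ b₁ c₁ p' q) p *
        deriv (fun q' => tildeFun lam a₂ b₂ c₂ p q') q -
      deriv (fun q' => tildeFun lam a₁ b₁ c₁ p q') q *
        deriv (fun p' => tildeFun lam a₂ b₂ c₂ p' q) p =
    tildeFun lam (2 * (b₁ * c₂ - b₂ * c₁)) (2 * (c₁ * a₂ - c₂ * a₁))
      (-2 * (a₁ * b₂ - a₂ * b₁)) p q := by
  rw [(hasDerivAt_tildeFun_fst ..).deriv, (hasDerivAt_tildeFun_fst ..).deriv,
    (hasDerivAt_tildeFun_snd ..).deriv, (hasDerivAt_tildeFun_snd ..).deriv, tildeFun]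
  linear_combination 4 * (a₁ * b₂ - a₂ * b₁) * p * sin_sq_add_cos_sq q
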